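/- arXiv:1712.08039 — 11 statements merged into one kernel-verified Lean document; each statement's English description precedes it below -/
import Mathlib

section
/- For all t > 0, ln(sinh(t)/t) < (1/6)t^2. -/
/-!
Comparing power series: `sinh t / t = ∑ t^(2n) / (2n+1)!` and `exp (t²/6) = ∑ t^(2n) / (6^n n!)`,
and `6^n n! ≤ (2n+1)!` for all `n`, strictly from `n = 2` on. Hence `sinh t / t < exp (t²/6)`
for `t ≠ 0`, and the claim follows by taking logarithms.
-/

open Real Nat

theorem six_pow_mul_factorial_le (n : ℕ) : 6 ^ n * n ! ≤ (2 * n + 1)! := by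
  induction n with
  | zero => simp
  | succ n ih =>
    calc 6 ^ (n + 1) * (n + 1)! = 6 * (n + 1) * (6 ^ n * n !) := by
          rw [factorial_succ]; ring
      _ ≤ (2 * n + 3) * (2 * n + 2) * (2 * n + 1)! := Nat.mul_le_mul (by nlinarith) ih
      _ = (2 * n + 1 + 1 + 1)! := by
          rw [factorial_succ (2 * n + 1 + 1), factorial_succ (2 * n + 1)]; ring

theorem Real.hasSum_sinh_div {t : ℝ} (ht : t ≠ 0) :
    HasSum (fun n ↦ t ^ (2 * n) / (2 * n + 1)!) (sinh t / t) := by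
  have h_term (n : ℕ) : t ^ (2 * n + 1) / (2 * n + 1)! / t = t ^ (2 * n) / (2 * n + 1)! := by
    rw [pow_succ, mul_div_right_comm, mul_div_cancel_right₀ _ ht]
  exact ((hasSum_sinh t).div_const t).congr_fun fun n ↦ (h_term n).symm

theorem Real.sinh_div_lt_exp_sq_div_six {t : ℝ} (ht : t ≠ 0) : sinh t / t < exp (t ^ 2 / 6) := by
  have h_exp : HasSum (fun n ↦ t ^ (2 * n) / (6 ^ n * n !)) (exp (t ^ 2 / 6)) := by
    rw [exp_eq_exp_ℝ]
    have h_term (n : ℕ) : (t ^ 2 / 6) ^ n / n ! = t ^ (2 * n) / (6 ^ n * n !) := by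
      rw [div_pow, pow_mul, div_div]
    exact (NormedSpace.expSeries_div_hasSum_exp _).congr_fun fun n ↦ (h_term n).symm
  refine hasSum_lt (fun n ↦ ?_) ?_ (hasSum_sinh_div ht) h_exp (i := 2)
  · exact div_le_div_of_nonneg_left ((even_two_mul n).pow_nonneg t) (by positivity)
      (mod_cast six_pow_mul_factorial_le n)
  · have ht4 : 0 < t ^ 4 := by positivity
    norm_num [factorial]
    linarith

theorem log_sinh_div_lt (t : ℝ) (ht : 0 < t) :
    Real.log (Real.sinh t / t) < (1 / 6) * t ^ 2 := by
  rw [Real.log_lt_iff_lt_exp (div_pos (sinh_pos_iff.2 ht) ht), one_div_mul_eq_div]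
  exact sinh_div_lt_exp_sq_div_six ht.ne'
end

section
/- For all t > 0, (1/6)t^2 - (1/180)t^4 < ln(sinh(t)/t). -/
/-!
Bound `sinh t / t` below by `1 + l`, where `l` is its Taylor polynomial of degree 6 minus one,
and `log (1 + l)` below by the first two terms of `log (1 + x) = 2 artanh (x / (x + 2))`.
After clearing denominators, the resulting rational lower bound exceeds `t²/6 - t⁴/180` by a
polynomial in `t²` with nonnegative coefficients whose `t⁶` coefficient is positive.
-/

open Real Finset Nat

theorem sum_range_le_sinh {x : ℝ} (hx : 0 ≤ x) (n : ℕ) :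
    ∑ k ∈ range n, x ^ (2 * k + 1) / (2 * k + 1)! ≤ sinh x :=
  sum_le_hasSum _ (fun k _ ↦ by positivity) (hasSum_sinh x)

theorem sum_range_le_log_one_add {x : ℝ} (hx : 0 < x) (n : ℕ) :
    ∑ k ∈ range n, 2 / (2 * k + 1) * (x / (x + 2)) ^ (2 * k + 1) ≤ log (1 + x) := by
  have h := hasSum_log_one_add_inv (inv_pos.2 hx)
  rw [inv_inv] at h
  refine sum_le_hasSum _ (fun k _ ↦ by positivity) (h.congr_fun fun k ↦ ?_)
  field_simp
  ring

theorem one_add_le_sinh_div {t : ℝ} (ht : 0 < t) :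
    1 + (t ^ 2 / 6 + t ^ 4 / 120 + t ^ 6 / 5040) ≤ sinh t / t := by
  have h := sum_range_le_sinh ht.le 4
  norm_num [sum_range_succ, Nat.factorial] at h
  rw [le_div_iff₀ ht]
  linear_combination h

theorem log_sinh_div_gt (t : ℝ) (ht : 0 < t) :
    (1 / 6) * t ^ 2 - (1 / 180) * t ^ 4 < Real.log (Real.sinh t / t) := by
  set l := t ^ 2 / 6 + t ^ 4 / 120 + t ^ 6 / 5040 with hl
  have hl_pos : 0 < l := by positivity
  calc (1 / 6) * t ^ 2 - (1 / 180) * t ^ 4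
      < 2 * (l / (l + 2)) + 2 / 3 * (l / (l + 2)) ^ 3 := by
        rw [hl]
        field_simp
        nlinarith [pow_pos ht 6, pow_pos ht 8, pow_pos ht 10, pow_pos ht 12,
          pow_pos ht 14, pow_pos ht 16, pow_pos ht 18, pow_pos ht 20, pow_pos ht 22]
    _ ≤ log (1 + l) := by
        have h := sum_range_le_log_one_add hl_pos 2
        norm_num [sum_range_succ] at h
        linarith
    _ ≤ log (sinh t / t) := log_le_log (by positivity) (one_add_le_sinh_div ht)
end

section
/- For all t > 0, ln(sinh(t)/t) < (1/6)t^2 - (1/180)t^4 + (1/2835)t^6. -/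
/-!
Let `p` be the polynomial on the right. The function `p t - log (sinh t / t)` is continuous on
`[0, ∞)`, vanishes at `0`, and has derivative `p' t - (coth t - 1 / t)`, so it suffices that
`t cosh t < a sinh t` with `a = 1 + t p' t`. Multiplying by `2 eᵗ`, this says
`a + t < (a - t) e^{2t}`, which follows from the Taylor bound `e^{2t} ≥ ∑_{i<10} (2t)ⁱ / i!`:
the difference is a polynomial with positive coefficients.
-/

open Real Filter Set Topology

theorem tendsto_sinh_div_self_nhdsNE_zero :
    Tendsto (fun t : ℝ => sinh t / t) (𝓝[≠] 0) (𝓝 1) := by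
  simpa [div_eq_inv_mul] using (hasDerivAt_sinh 0).tendsto_slope_zero

theorem continuous_log_sinh_div_self : Continuous fun t : ℝ => log (sinh t / t) := by
  rw [continuous_iff_continuousAt]
  intro x
  rcases eq_or_ne x 0 with rfl | hx
  · -- at `0` the junk value `log (0 / 0) = 0` agrees with the limit `log 1`
    rw [← continuousWithinAt_compl_self, ContinuousWithinAt]
    simpa [Function.comp_def] using
      (continuousAt_log one_ne_zero).tendsto.comp tendsto_sinh_div_self_nhdsNE_zero
  · exact (continuous_sinh.continuousAt.div continuousAt_id hx).log
      (div_ne_zero (sinh_ne_zero.mpr hx) hx)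

theorem hasDerivAt_log_sinh_div_self {x : ℝ} (hx : 0 < x) :
    HasDerivAt (fun t => log (sinh t / t)) (cosh x / sinh x - 1 / x) x := by
  have hs : 0 < sinh x := sinh_pos_iff.mpr hx
  have hquot : HasDerivAt (fun t => sinh t / t) ((cosh x * x - sinh x * 1) / x ^ 2) x :=
    (hasDerivAt_sinh x).div (hasDerivAt_id' x) hx.ne'
  convert hquot.log (div_pos hs hx).ne' using 1
  field_simp

theorem taylor_nine_le_exp_two_mul {t : ℝ} (ht : 0 ≤ t) :
    1 + 2 * t + 2 * t ^ 2 + 4 / 3 * t ^ 3 + 2 / 3 * t ^ 4 + 4 / 15 * t ^ 5 + 4 / 45 * t ^ 6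
      + 8 / 315 * t ^ 7 + 2 / 315 * t ^ 8 + 4 / 2835 * t ^ 9 ≤ exp (2 * t) := by
  convert sum_le_exp_of_nonneg (by positivity : 0 ≤ 2 * t) 10 using 1
  simp [Finset.sum_range_succ, Nat.factorial]
  ring

theorem mul_cosh_lt_mul_sinh_iff (a t : ℝ) :
    t * cosh t < a * sinh t ↔ a + t < (a - t) * exp (2 * t) := by
  have hscaled : 2 * exp t * (a * sinh t - t * cosh t) = (a - t) * exp (2 * t) - (a + t) := by
    rw [sinh_eq, cosh_eq, exp_neg, two_mul t, exp_add]
    field_simp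
    ring
  calc t * cosh t < a * sinh t ↔ 0 < 2 * exp t * (a * sinh t - t * cosh t) := by
        rw [mul_pos_iff_of_pos_left (by positivity), sub_pos]
    _ ↔ _ := by rw [hscaled, sub_pos]

theorem add_lt_sub_mul_exp_two_mul {t : ℝ} (ht : 0 < t) :
    (1 + t ^ 2 / 3 - t ^ 4 / 45 + 2 * t ^ 6 / 945) + t
      < (1 + t ^ 2 / 3 - t ^ 4 / 45 + 2 * t ^ 6 / 945 - t) * exp (2 * t) := by
  have hcoeff : 0 < 1 + t ^ 2 / 3 - t ^ 4 / 45 + 2 * t ^ 6 / 945 - t := by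
    nlinarith [sq_nonneg (t - 1), sq_nonneg (t - 2), sq_nonneg (t ^ 2 * (t - 2)),
      sq_nonneg (t ^ 3 - 4 * t)]
  refine lt_of_lt_of_le ?_ (mul_le_mul_of_nonneg_left (taylor_nine_le_exp_two_mul ht.le) hcoeff.le)
  nlinarith [pow_pos ht 9, pow_pos ht 10, pow_pos ht 11, pow_pos ht 12,
    pow_pos ht 13, pow_pos ht 14, pow_pos ht 15]

theorem cosh_div_sinh_sub_inv_lt {x : ℝ} (hx : 0 < x) :
    cosh x / sinh x - 1 / x < x / 3 - x ^ 3 / 45 + 2 * x ^ 5 / 945 := by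
  have hs : 0 < sinh x := sinh_pos_iff.mpr hx
  have hcosh := (mul_cosh_lt_mul_sinh_iff _ x).mpr (add_lt_sub_mul_exp_two_mul hx)
  rw [sub_lt_iff_lt_add, div_lt_iff₀ hs]
  calc cosh x = x * cosh x / x := by field_simp
    _ < (1 + x ^ 2 / 3 - x ^ 4 / 45 + 2 * x ^ 6 / 945) * sinh x / x := by gcongr
    _ = _ := by field_simp; ring

theorem log_sinh_div_lt_deg6 (t : ℝ) (ht : 0 < t) :
    Real.log (Real.sinh t / t) <
      (1 / 6) * t ^ 2 - (1 / 180) * t ^ 4 + (1 / 2835) * t ^ 6 := by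
  let p : ℝ → ℝ := fun s => (1 / 6) * s ^ 2 - (1 / 180) * s ^ 4 + (1 / 2835) * s ^ 6
  have hp : ∀ x, HasDerivAt p (x / 3 - x ^ 3 / 45 + 2 * x ^ 5 / 945) x := fun x =>
    (((hasDerivAt_pow 2 x).const_mul _).sub ((hasDerivAt_pow 4 x).const_mul _)
      |>.add ((hasDerivAt_pow 6 x).const_mul _)).congr_deriv (by ring)
  have hmono : StrictMonoOn (fun s => p s - log (sinh s / s)) (Ici 0) := by
    refine strictMonoOn_of_hasDerivWithinAt_pos (convex_Ici 0)
      ((by fun_prop : Continuous p).sub continuous_log_sinh_div_self).continuousOn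
      (f' := fun x => x / 3 - x ^ 3 / 45 + 2 * x ^ 5 / 945 - (cosh x / sinh x - 1 / x))
      (fun x hx => ?_) (fun x hx => ?_) <;> rw [interior_Ici] at hx
    · exact ((hp x).sub (hasDerivAt_log_sinh_div_self hx)).hasDerivWithinAt
    · exact sub_pos.mpr (cosh_div_sinh_sub_inv_lt hx)
  simpa [p] using hmono self_mem_Ici ht.le ht
end

section
/- For all x > 0, ψ'(x + 1/2) < (1/x) · (x^4 + (67/36)x^2 + 256/945) / (x^4 + (35/18)x^2 + 407/1008), where ψ' is the trigamma function. -/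
/-!
Differentiating the Gauss limit `log Γ(x) = lim (x log n + log n! - ∑_{m ≤ n} log (x + m))`
termwise twice gives `ψ'(y) = ∑_{j ≥ 0} 1 / (y + j)²` for `y > 0`. If `F(t)` denotes the
right-hand side of the bound, then `F(t) - F(t + 1)` exceeds `1 / (t + 1/2)²` by a rational
function with constant positive numerator, and `F(t) → 0`; telescoping
`∑_j (F(x + j) - F(x + j + 1)) = F(x)` then bounds `ψ'(x + 1/2) = ∑_j 1 / (x + 1/2 + j)²`
strictly from above.
-/

open Real Filter Topology Finset

/-- The trigamma function, the second derivative of `log ∘ Γ`. -/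
noncomputable def trigamma (x : ℝ) : ℝ :=
  deriv (deriv (fun y : ℝ => Real.log (Real.Gamma y))) x

theorem summable_one_div_add_sq {a : ℝ} (ha : 0 < a) :
    Summable fun j : ℕ => 1 / (a + j) ^ 2 := by
  refine ((Real.summable_one_div_nat_add_rpow a 2).mpr one_lt_two).congr fun j => ?_
  rw [abs_of_pos (by positivity), Real.rpow_two, add_comm]

theorem norm_one_div_add_sq_le {a x : ℝ} (ha : 0 < a) (hax : a ≤ x) (j : ℕ) :
    ‖1 / (x + j) ^ 2‖ ≤ 1 / (a + j) ^ 2 := by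
  rw [Real.norm_of_nonneg (by positivity)]
  gcongr

theorem hasDerivAt_one_div_succ_sub_one_div_add {x : ℝ} (hx : 0 < x) (j : ℕ) :
    HasDerivAt (fun x : ℝ => 1 / ((j : ℝ) + 1) - 1 / (x + j)) (1 / (x + j) ^ 2) x := by
  have hxj : x + j ≠ 0 := by positivity
  simpa [one_div, neg_div] using (((hasDerivAt_id x).add_const (j : ℝ)).inv hxj).const_sub _

noncomputable def digammaSeries (x : ℝ) : ℝ :=
  ∑' j : ℕ, (1 / ((j : ℝ) + 1) - 1 / (x + j))

theorem summable_digammaSeries {x : ℝ} (hx : 0 < x) :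
    Summable fun j : ℕ => 1 / ((j : ℝ) + 1) - 1 / (x + j) := by
  obtain ⟨a, ha, ha1, hax⟩ : ∃ a : ℝ, 0 < a ∧ a < 1 ∧ a < x :=
    ⟨min x 1 / 2, by positivity, by linarith [min_le_right x 1, lt_min hx one_pos],
      by linarith [min_le_left x 1, lt_min hx one_pos]⟩
  exact summable_of_summable_hasDerivAt_of_isPreconnected (summable_one_div_add_sq ha)
    isOpen_Ioi isPreconnected_Ioi (t := Set.Ioi a)
    (fun j _ hy => hasDerivAt_one_div_succ_sub_one_div_add (ha.trans hy) j)
    (fun j _ hy => norm_one_div_add_sq_le ha (le_of_lt hy) j) ha1 (by simp [add_comm]) hax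

theorem hasDerivAt_digammaSeries {x : ℝ} (hx : 0 < x) :
    HasDerivAt digammaSeries (∑' j : ℕ, 1 / (x + j) ^ 2) x :=
  hasDerivAt_tsum_of_isPreconnected (summable_one_div_add_sq (half_pos hx))
    isOpen_Ioi isPreconnected_Ioi (t := Set.Ioi (x / 2))
    (fun j _ hy => hasDerivAt_one_div_succ_sub_one_div_add ((half_pos hx).trans hy) j)
    (fun j _ hy => norm_one_div_add_sq_le (half_pos hx) (le_of_lt hy) j)
    (half_lt_self hx) (summable_digammaSeries hx) (half_lt_self hx)

theorem tendstoUniformlyOn_digammaSeries {a b : ℝ} (ha : 0 < a) (hab : a ≤ b) :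
    TendstoUniformlyOn (fun n x => ∑ j ∈ range n, (1 / ((j : ℝ) + 1) - 1 / (x + j)))
      digammaSeries atTop (Set.Icc a b) := by
  refine tendstoUniformlyOn_tsum_nat
    (((summable_digammaSeries ha).abs.add (summable_digammaSeries (ha.trans_le hab)).abs))
    fun j x ⟨hax, hxb⟩ => ?_
  -- each term is increasing in `x`, hence bounded by its values at the endpoints
  have hlo : 1 / ((j : ℝ) + 1) - 1 / (a + j) ≤ 1 / ((j : ℝ) + 1) - 1 / (x + j) := by
    gcongr
  have hhi : 1 / ((j : ℝ) + 1) - 1 / (x + j) ≤ 1 / ((j : ℝ) + 1) - 1 / (b + j) := by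
    have : 0 < x := ha.trans_le hax
    gcongr
  exact (abs_le_max_abs_abs hlo hhi).trans (max_le_add_of_nonneg (abs_nonneg _) (abs_nonneg _))

theorem tendsto_log_sub_harmonic_succ :
    Tendsto (fun n : ℕ => log n - harmonic (n + 1)) atTop (𝓝 (-eulerMascheroniConstant)) := by
  have h := ((tendsto_harmonic_sub_log.comp (tendsto_add_atTop_nat 1)).add
    tendsto_log_nat_add_one_sub_log).neg
  rw [add_zero] at h
  exact h.congr fun n => by simp

theorem hasDerivAt_logGammaSeq {x : ℝ} (hx : 0 < x) (n : ℕ) :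
    HasDerivAt (fun x => BohrMollerup.logGammaSeq x n)
      (log n - ∑ j ∈ range (n + 1), 1 / (x + j)) x := by
  refine ((hasDerivAt_mul_const _).add_const _).sub (HasDerivAt.fun_sum fun j _ => ?_)
  simpa [one_div] using ((hasDerivAt_id x).add_const (j : ℝ)).log (by positivity)

theorem hasDerivAt_log_Gamma {x : ℝ} (hx : 0 < x) :
    HasDerivAt (fun x => log (Gamma x)) (-eulerMascheroniConstant + digammaSeries x) x := by
  have hpartial : TendstoUniformlyOn
      (fun n x => ∑ j ∈ range (n + 1), (1 / ((j : ℝ) + 1) - 1 / (x + j)))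
      digammaSeries atTop (Set.Icc (x / 2) (2 * x)) := fun u hu =>
    (tendsto_add_atTop_nat 1).eventually
      (tendstoUniformlyOn_digammaSeries (half_pos hx) (by linarith) u hu)
  have hderiv := (tendsto_log_sub_harmonic_succ.tendstoUniformlyOn_const _).add hpartial
  refine hasDerivAt_of_tendstoUniformlyOn isOpen_Ioo
    ((hderiv.mono Set.Ioo_subset_Icc_self).congr ?_)
    (.of_forall fun n y hy => hasDerivAt_logGammaSeq (by linarith [hy.1]) n)
    (fun y hy => BohrMollerup.tendsto_log_gamma (by linarith [hy.1]))
    ⟨half_lt_self hx, by linarith⟩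
  refine .of_forall fun n y _ => ?_
  simp only [Pi.add_apply, sum_sub_distrib, harmonic]
  push_cast
  simp only [one_div]
  ring

theorem trigamma_eq_tsum {x : ℝ} (hx : 0 < x) : trigamma x = ∑' j : ℕ, 1 / (x + j) ^ 2 := by
  have hdigamma : deriv (fun x => log (Gamma x)) =ᶠ[𝓝 x]
      fun x => -eulerMascheroniConstant + digammaSeries x :=
    (eventually_gt_nhds hx).mono fun y hy => (hasDerivAt_log_Gamma hy).deriv
  rw [trigamma, hdigamma.deriv_eq]
  exact ((hasDerivAt_digammaSeries hx).const_add _).deriv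

theorem tsum_lt_of_lt_sub_succ {g F : ℕ → ℝ} (hg : ∀ n, 0 ≤ g n)
    (hgF : ∀ n, g n < F n - F (n + 1)) (hF : Tendsto F atTop (𝓝 0)) :
    ∑' n, g n < F 0 := by
  have htelescope : HasSum (fun n => F n - F (n + 1)) (F 0) := by
    rw [hasSum_iff_tendsto_nat_of_nonneg fun n => (hg n).trans (hgF n).le]
    have h := (tendsto_const_nhds (x := F 0)).sub hF
    rw [sub_zero] at h
    exact h.congr fun n => (sum_range_sub' F n).symm
  exact Summable.tsum_lt_tsum (fun n => (hgF n).le) (hgF 0)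
    (.of_nonneg_of_le hg (fun n => (hgF n).le) htelescope.summable) htelescope.summable
    |>.trans_eq htelescope.tsum_eq

noncomputable def trigammaBound (t : ℝ) : ℝ :=
  (t ^ 4 + 67 / 36 * t ^ 2 + 256 / 945) / (t * (t ^ 4 + 35 / 18 * t ^ 2 + 407 / 1008))

theorem trigammaBound_sub_succ {t : ℝ} (ht : 0 < t) :
    trigammaBound t - trigammaBound (t + 1) = 1 / (t + 1 / 2) ^ 2 +
      100 / 441 / (t * (t ^ 4 + 35 / 18 * t ^ 2 + 407 / 1008) *
        ((t + 1) * ((t + 1) ^ 4 + 35 / 18 * (t + 1) ^ 2 + 407 / 1008)) * (t + 1 / 2) ^ 2) := by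
  unfold trigammaBound
  field_simp
  ring

theorem one_div_sq_lt_trigammaBound_sub_succ {t : ℝ} (ht : 0 < t) :
    1 / (t + 1 / 2) ^ 2 < trigammaBound t - trigammaBound (t + 1) := by
  rw [trigammaBound_sub_succ ht, lt_add_iff_pos_right]
  positivity

theorem trigammaBound_le_inv {t : ℝ} (ht : 0 < t) : trigammaBound t ≤ t⁻¹ := by
  rw [trigammaBound, ← one_div, div_le_div_iff₀ (by positivity) ht]
  nlinarith [pow_pos ht 3, pow_pos ht 5]

theorem tendsto_trigammaBound_atTop : Tendsto trigammaBound atTop (𝓝 0) := by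
  refine squeeze_zero' ?_ ?_ tendsto_inv_atTop_zero
  · filter_upwards [eventually_gt_atTop 0] with t ht
    rw [trigammaBound]
    positivity
  · filter_upwards [eventually_gt_atTop 0] with t ht using trigammaBound_le_inv ht

theorem trigamma_upper_bound (x : ℝ) (hx : 0 < x) :
    trigamma (x + 1 / 2) <
      (1 / x) * (x ^ 4 + (67 / 36) * x ^ 2 + 256 / 945) /
        (x ^ 4 + (35 / 18) * x ^ 2 + 407 / 1008) := by
  rw [one_div_mul_eq_div, div_div, ← trigammaBound, trigamma_eq_tsum (by positivity)]
  have hstep (n : ℕ) :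
      1 / (x + 1 / 2 + n) ^ 2 < trigammaBound (x + n) - trigammaBound (x + ↑(n + 1)) := by
    rw [Nat.cast_succ, ← add_assoc, add_right_comm]
    exact one_div_sq_lt_trigammaBound_sub_succ (by positivity)
  have hlim : Tendsto (fun n : ℕ => trigammaBound (x + n)) atTop (𝓝 0) :=
    tendsto_trigammaBound_atTop.comp <|
      tendsto_atTop_add_const_left _ x tendsto_natCast_atTop_atTop
  simpa using tsum_lt_of_lt_sub_succ (fun n => by positivity) hstep hlim
end

section
/- For all x > 0, g(x+1) - g(x) = 921600 / (x(x+1)(2x+1)^2 (1008x^4 + 1960x^2 + 407)(1008x^4 + 4032x^3 + 8008x^2 + 7952x + 3375)), where g(x) = ψ'(x + 1/2) - (1/x)·(x^4 + (67/36)x^2 + 256/945)/(x^4 + (35/18)x^2 + 407/1008). -/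
/-!
Differentiating `log Γ(t + 1) = log t + log Γ(t)` twice gives `ψ'(x + 1) = ψ'(x) - 1 / x²`, so
`g(x + 1) - g(x)` is `-1 / (x + 1/2)²` minus a difference of explicit rational functions, and the
claim becomes an identity of rational functions.
-/

open Real Filter Topology

theorem Real.contDiffAt_Gamma {x : ℝ} (hx : ∀ m : ℕ, x ≠ -m) {n : WithTop ℕ∞} :
    ContDiffAt ℝ n Gamma x := by
  have hcomplex : ContDiff ℝ n fun t : ℝ => (Complex.Gamma t)⁻¹.re :=
    (Complex.differentiable_one_div_Gamma.contDiff (n := n)).real_of_complex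
  have hinv : ContDiff ℝ n fun t : ℝ => (Gamma t)⁻¹ := by
    convert hcomplex using 2 with t
    rw [Complex.Gamma_ofReal, ← Complex.ofReal_inv, Complex.ofReal_re]
  simpa using hinv.contDiffAt.fun_inv (inv_ne_zero (Gamma_ne_zero hx))

theorem contDiffAt_log_Gamma {x : ℝ} (hx : ∀ m : ℕ, x ≠ -m) {n : WithTop ℕ∞} :
    ContDiffAt ℝ n (fun t => log (Gamma t)) x :=
  (contDiffAt_Gamma hx).log (Gamma_ne_zero hx)

theorem log_Gamma_add_one_eventuallyEq {x : ℝ} (hx : ∀ m : ℕ, x ≠ -m) :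
    (fun t => log (Gamma (t + 1))) =ᶠ[𝓝 x] fun t => log t + log (Gamma t) := by
  have hΓ : ∀ᶠ t in 𝓝 x, Gamma t ≠ 0 :=
    (differentiableAt_Gamma hx).continuousAt.eventually_ne (Gamma_ne_zero hx)
  filter_upwards [hΓ, eventually_ne_nhds (by simpa using hx 0)] with t hΓt ht
  rw [Gamma_add_one ht, log_mul ht hΓt]

theorem trigamma_add_one {x : ℝ} (hx : ∀ m : ℕ, x ≠ -m) :
    trigamma (x + 1) = trigamma x - 1 / x ^ 2 := by
  set L : ℝ → ℝ := fun t => log (Gamma t)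
  have hx0 : x ≠ 0 := by simpa using hx 0
  have hL : ContDiffAt ℝ 2 L x := contDiffAt_log_Gamma hx
  have hshift : deriv (deriv fun t => L (t + 1)) x = trigamma (x + 1) := by
    rw [show deriv (fun t => L (t + 1)) = fun t => deriv L (t + 1) from
      funext (deriv_comp_add_const L 1), deriv_comp_add_const]
    rfl
  have hderiv : deriv (fun t => log t + L t) =ᶠ[𝓝 x] fun t => t⁻¹ + deriv L t := by
    filter_upwards [hL.eventually (by simp), eventually_ne_nhds hx0] with t hLt ht
    rw [deriv_fun_add (differentiableAt_log ht) (hLt.differentiableAt (by norm_num)), deriv_log]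
  calc trigamma (x + 1) = deriv (fun t => t⁻¹ + deriv L t) x := by
        rw [← hshift, ((log_Gamma_add_one_eventuallyEq hx).deriv.trans hderiv).deriv_eq]
    _ = -(x ^ 2)⁻¹ + trigamma x := by
        rw [deriv_fun_add (differentiableAt_inv hx0)
          ((hL.derivWithin (m := 1) le_rfl).differentiableAt one_ne_zero), deriv_inv]
        rfl
    _ = trigamma x - 1 / x ^ 2 := by ring

theorem g_diff_eq (g : ℝ → ℝ)
    (hg : ∀ x : ℝ, g x = trigamma (x + 1 / 2) -
      (1 / x) * (x ^ 4 + (67 / 36) * x ^ 2 + 256 / 945) /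
        (x ^ 4 + (35 / 18) * x ^ 2 + 407 / 1008))
    (x : ℝ) (hx : 0 < x) :
    g (x + 1) - g x =
      921600 / (x * (x + 1) * (2 * x + 1) ^ 2 *
        (1008 * x ^ 4 + 1960 * x ^ 2 + 407) *
        (1008 * x ^ 4 + 4032 * x ^ 3 + 8008 * x ^ 2 + 7952 * x + 3375)) := by
  have hpos : 0 < x + 1 / 2 := by positivity
  have hrec := trigamma_add_one (x := x + 1 / 2) fun m h => by
    have := Nat.cast_nonneg (α := ℝ) m
    linarith
  rw [hg, hg, show x + 1 + 1 / 2 = x + 1 / 2 + 1 by ring, hrec]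
  field_simp
  ring
end

section
/- For all t ∈ (0, 1], ln(sinh(t)/t + t^6/810) < (1 + t^4/135) · ln(sinh(t)/t). -/
/-!
Write `s = sinh t / t`. The Taylor series of `sinh` gives `s - 1 ≥ t² / 6`. By concavity of `log`,
`log (s + a) < log s + a / s` and `1 - s⁻¹ ≤ log s`, so `log (s + a) < (1 + c) log s` as soon as
`a ≤ c (s - 1)`. With `a = t⁶ / 810 = (t⁴ / 135) (t² / 6)` and `c = t⁴ / 135` this is the bound on `s`.
-/

open Real

lemma Real.self_add_pow_three_div_six_le_sinh {x : ℝ} (hx : 0 ≤ x) : x + x ^ 3 / 6 ≤ sinh x := by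
  have := sum_le_hasSum (Finset.range 2) (fun n _ ↦ by positivity) (hasSum_sinh x)
  norm_num [Finset.sum_range_succ, Nat.factorial] at this
  exact this

lemma Real.one_add_sq_div_six_le_sinh_div_self {x : ℝ} (hx : 0 < x) :
    1 + x ^ 2 / 6 ≤ sinh x / x := by
  rw [le_div_iff₀ hx]
  linarith [self_add_pow_three_div_six_le_sinh hx.le]

lemma Real.log_add_lt_log_add_div {x a : ℝ} (hx : 0 < x) (ha : 0 < a) :
    log (x + a) < log x + a / x := by
  have hxa : x + a = x * (1 + a / x) := by field_simp
  have hpos : 0 < a / x := by positivity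
  rw [hxa, log_mul hx.ne' (by positivity)]
  linarith [log_lt_sub_one_of_pos (by positivity : 0 < 1 + a / x) (by linarith)]

lemma Real.log_add_lt_one_add_mul_log {s a c : ℝ} (hs : 0 < s) (ha : 0 < a) (hc : 0 ≤ c)
    (h : a ≤ c * (s - 1)) : log (s + a) < (1 + c) * log s :=
  calc log (s + a) < log s + a / s := log_add_lt_log_add_div hs ha
    _ ≤ log s + c * (1 - s⁻¹) := by
      gcongr
      rw [div_le_iff₀ hs]
      calc a ≤ c * (s - 1) := h
        _ = c * (1 - s⁻¹) * s := by field_simp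
    _ ≤ (1 + c) * log s := by nlinarith [one_sub_inv_le_log_of_pos hs]

theorem W1_lt_Wc1_general (t : ℝ) (ht0 : 0 < t) :
    Real.log (Real.sinh t / t + t ^ 6 / 810) <
      (1 + t ^ 4 / 135) * Real.log (Real.sinh t / t) := by
  have hs := one_add_sq_div_six_le_sinh_div_self ht0
  refine log_add_lt_one_add_mul_log (by positivity) (by positivity) (by positivity) ?_
  calc t ^ 6 / 810 = t ^ 4 / 135 * (t ^ 2 / 6) := by ring
    _ ≤ t ^ 4 / 135 * (sinh t / t - 1) := by gcongr; linarith

theorem W1_lt_Wc1 (t : ℝ) (ht0 : 0 < t) (ht1 : t ≤ 1) :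
    Real.log (Real.sinh t / t + t ^ 6 / 810) <
      (1 + t ^ 4 / 135) * Real.log (Real.sinh t / t) :=
  W1_lt_Wc1_general t ht0
end

section
/- For all t ∈ (0, 1], (t^3/270) · ln(sinh(t)/t) < ln(1 + t^5/1620). -/
set_option maxHeartbeats 1000000 in

theorem Wc1_lt_W01star (t : ℝ) (ht0 : 0 < t) (ht1 : t ≤ 1) :
    (t ^ 3 / 270) * Real.log (Real.sinh t / t) < Real.log (1 + t ^ 5 / 1620) := by
  have habs : |t| ≤ 1 := by rw [abs_of_pos ht0]; exact ht1
  have habs' : |(-t)| ≤ 1 := by rwa [abs_neg]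
  -- Taylor bounds for exp
  have hb1 := Real.exp_bound habs (n := 6) (by norm_num)
  have hb2 := Real.exp_bound habs' (n := 6) (by norm_num)
  simp only [Finset.sum_range_succ, Finset.sum_range_zero, Nat.factorial] at hb1 hb2
  rw [abs_of_pos ht0] at hb1
  rw [abs_neg, abs_of_pos ht0] at hb2
  norm_num at hb1 hb2
  have hb1' := (abs_sub_le_iff.1 hb1).1
  have hb2' := (abs_sub_le_iff.1 hb2).2
  -- sinh upper bound
  have hsinh : Real.sinh t ≤ t + t ^ 3 / 6 + (1/100) * t ^ 5 := by
    rw [Real.sinh_eq]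
    have ht6 : t ^ 6 ≤ t ^ 5 := by
      calc t ^ 6 = t ^ 5 * t := by ring
      _ ≤ t ^ 5 * 1 := by nlinarith [pow_pos ht0 5]
      _ = t ^ 5 := by ring
    nlinarith [pow_pos ht0 5]
  -- exp lower bound
  have hexp : 1 + t ^ 2 / 6 + (t ^ 2 / 6) ^ 2 / 2 ≤ Real.exp (t ^ 2 / 6) := by
    have h := Real.sum_le_exp_of_nonneg (x := t ^ 2 / 6) (by positivity) 3
    simp only [Finset.sum_range_succ, Finset.sum_range_zero, Nat.factorial] at h
    norm_num at h
    linarith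
  have hst : 0 < Real.sinh t / t := div_pos (Real.sinh_pos_iff.2 ht0) ht0
  -- key bound on y = sinh t / t * exp(-(t^2/6))
  have hy : Real.sinh t / t * Real.exp (-(t ^ 2 / 6)) ≤ 1 - t ^ 4 / 500 := by
    rw [Real.exp_neg]
    rw [mul_inv_le_iff₀ (Real.exp_pos _)]
    have h1 : Real.sinh t / t ≤ 1 + t ^ 2 / 6 + (1/100) * t ^ 4 := by
      rw [div_le_iff₀ ht0]
      calc Real.sinh t ≤ t + t ^ 3 / 6 + (1/100) * t ^ 5 := hsinh
      _ = (1 + t ^ 2 / 6 + (1/100) * t ^ 4) * t := by ring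
    have h2 : (1 - t ^ 4 / 500) * (1 + t ^ 2 / 6 + (t ^ 2 / 6) ^ 2 / 2)
        ≤ (1 - t ^ 4 / 500) * Real.exp (t ^ 2 / 6) := by
      apply mul_le_mul_of_nonneg_left hexp
      nlinarith [pow_pos ht0 4, pow_le_one₀ ht0.le ht1 (n := 4)]
    refine h1.trans (le_trans ?_ h2)
    nlinarith [pow_le_one₀ ht0.le ht1 (n := 2), pow_le_one₀ ht0.le ht1 (n := 4),
      pow_pos ht0 2, pow_pos ht0 4, pow_pos ht0 6, pow_pos ht0 8,
      pow_le_one₀ ht0.le ht1 (n := 6), pow_le_one₀ ht0.le ht1 (n := 8)]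
  -- log bound for sinh t / t
  have hlog : Real.log (Real.sinh t / t) ≤ t ^ 2 / 6 - t ^ 4 / 500 := by
    have hy0 : 0 < Real.sinh t / t * Real.exp (-(t ^ 2 / 6)) :=
      mul_pos hst (Real.exp_pos _)
    have h := Real.log_le_sub_one_of_pos hy0
    rw [Real.log_mul (ne_of_gt hst) (ne_of_gt (Real.exp_pos _)), Real.log_exp] at h
    linarith
  -- lower bound for log(1 + x)
  set x : ℝ := t ^ 5 / 1620 with hxdef
  have hx0 : 0 < x := by positivity
  have hxlog : x - x ^ 2 ≤ Real.log (1 + x) := by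
    have h1x : (0:ℝ) < 1 + x := by linarith
    have h := Real.log_le_sub_one_of_pos (show (0:ℝ) < (1 + x)⁻¹ by positivity)
    rw [Real.log_inv] at h
    have h2 : 1 - (1 + x)⁻¹ ≤ Real.log (1 + x) := by linarith
    have h3 : (1 + x)⁻¹ ≤ 1 - x + x ^ 2 := by
      rw [inv_eq_one_div, div_le_iff₀ h1x]
      nlinarith
    nlinarith
  refine lt_of_lt_of_le ?_ hxlog
  have hmul : (t ^ 3 / 270) * Real.log (Real.sinh t / t)
      ≤ (t ^ 3 / 270) * (t ^ 2 / 6 - t ^ 4 / 500) := by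
    apply mul_le_mul_of_nonneg_left hlog (by positivity)
  refine lt_of_le_of_lt hmul ?_
  rw [hxdef]
  have ht3 : t ^ 3 ≤ 1 := pow_le_one₀ ht0.le ht1
  nlinarith [pow_pos ht0 7, pow_pos ht0 10]
end

section
/- For all t > 0, ln(sinh(t + t^7/810)) - ln(sinh(t)) > t^6/810. -/
/-!
Write `s = t ^ 6 / 810`, so that the claim reads `sinh t * exp s < sinh (t + t * s)`.
For `t ≥ 1` this follows from `sinh (t + h) > sinh t * exp h`, valid for every `h > 0` because
`cosh t > sinh t`, together with `t * s ≥ s`. For `t ≤ 1` the increment `t * s` is tiny: by the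
addition formula `sinh (t + t * s) ≥ sinh t + t * s * cosh t`, and `exp s < 1 / (1 - s)`, so it
suffices that `t * cosh t - sinh t > s * t * cosh t`; the left side is at least `t ^ 3 / 3`.
-/

open Real

namespace Real

lemma cube_div_three_le_mul_cosh_sub_sinh {t : ℝ} (ht : 0 ≤ t) :
    t ^ 3 / 3 ≤ t * cosh t - sinh t := by
  let f : ℝ → ℝ := fun x ↦ x * cosh x - sinh x - x ^ 3 / 3
  have hf : ∀ x, HasDerivAt f (x * sinh x - x ^ 2) x := fun x ↦
    ((((hasDerivAt_id x).mul (hasDerivAt_cosh x)).sub (hasDerivAt_sinh x)).sub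
      ((hasDerivAt_pow 3 x).div_const 3)).congr_deriv (by simp only [id]; push_cast; ring)
  have hmono : MonotoneOn f (Set.Ici 0) := by
    refine monotoneOn_of_deriv_nonneg (convex_Ici 0)
      (fun x _ ↦ (hf x).continuousAt.continuousWithinAt)
      (fun x _ ↦ (hf x).differentiableAt.differentiableWithinAt) fun x hx ↦ ?_
    rw [interior_Ici, Set.mem_Ioi] at hx
    rw [(hf x).deriv]
    nlinarith [self_le_sinh_iff.2 hx.le]
  have := hmono Set.self_mem_Ici ht ht
  simp only [f, zero_mul, sinh_zero, ne_eq, OfNat.ofNat_ne_zero, not_false_eq_true, zero_pow,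
    zero_div, sub_zero] at this
  linarith

lemma sinh_mul_exp_lt_sinh_add (t : ℝ) {h : ℝ} (hh : 0 < h) : sinh t * exp h < sinh (t + h) := by
  rw [← cosh_add_sinh h, sinh_add]
  nlinarith [sinh_lt_cosh t, sinh_pos_iff.2 hh]

lemma sinh_add_mul_cosh_le_sinh_add {t h : ℝ} (ht : 0 ≤ t) (hh : 0 ≤ h) :
    sinh t + h * cosh t ≤ sinh (t + h) := by
  rw [sinh_add]
  nlinarith [sinh_nonneg_iff.2 ht, one_le_cosh h, self_le_sinh_iff.2 hh, cosh_pos t]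

lemma sinh_mul_exp_lt_sinh_add_mul_of_one_le {t s : ℝ} (ht : 1 ≤ t) (hs : 0 < s) :
    sinh t * exp s < sinh (t + t * s) :=
  calc sinh t * exp s ≤ sinh t * exp (t * s) :=
        mul_le_mul_of_nonneg_left (exp_le_exp.2 (by nlinarith)) (sinh_pos_iff.2 (by linarith)).le
    _ < sinh (t + t * s) := sinh_mul_exp_lt_sinh_add t (by positivity)

lemma sinh_mul_exp_lt_sinh_add_mul_of_le_one {t s : ℝ} (ht : 0 < t) (ht₁ : t ≤ 1) (hs : 0 < s)
    (hst : s < t ^ 2 / 9) : sinh t * exp s < sinh (t + t * s) := by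
  have hsinh : 0 < sinh t := sinh_pos_iff.2 ht
  have hs₁ : s < 1 := by nlinarith
  have hcosh : cosh t < 3 :=
    calc cosh t ≤ exp (t ^ 2 / 2) := cosh_le_exp_half_sq t
      _ ≤ exp 1 := exp_le_exp.2 (by nlinarith)
      _ < 3 := exp_one_lt_three
  have hgap : s * (t * cosh t) < t * cosh t - sinh t :=
    calc s * (t * cosh t) < s * t * 3 := by nlinarith [mul_pos hs ht]
      _ ≤ t ^ 3 / 3 := by nlinarith
      _ ≤ t * cosh t - sinh t := cube_div_three_le_mul_cosh_sub_sinh ht.le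
  calc sinh t * exp s < sinh t * (1 / (1 - s)) := by
        gcongr
        exact exp_bound_div_one_sub_of_interval' hs hs₁
    _ ≤ sinh t + t * s * cosh t := by
        rw [mul_one_div, div_le_iff₀ (by linarith)]
        nlinarith
    _ ≤ sinh (t + t * s) := sinh_add_mul_cosh_le_sinh_add ht.le (by positivity)

end Real

theorem W01_lt_Wl1 (t : ℝ) (ht : 0 < t) :
    Real.log (Real.sinh (t + t ^ 7 / 810)) - Real.log (Real.sinh t) > t ^ 6 / 810 := by
  have hsinh : 0 < sinh t := sinh_pos_iff.2 ht
  have key : sinh t * exp (t ^ 6 / 810) < sinh (t + t ^ 7 / 810) := by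
    rw [show t ^ 7 / 810 = t * (t ^ 6 / 810) by ring]
    rcases le_or_gt t 1 with ht₁ | ht₁
    · refine sinh_mul_exp_lt_sinh_add_mul_of_le_one ht ht₁ (by positivity) ?_
      nlinarith [pow_le_one₀ ht.le ht₁ (n := 4), pow_pos ht 2]
    · exact sinh_mul_exp_lt_sinh_add_mul_of_one_le ht₁.le (by positivity)
  have hlog := log_lt_log (by positivity) key
  rw [log_mul hsinh.ne' (exp_ne_zero _), log_exp] at hlog
  linarith
end

section
/- For all t ∈ (0, 1], the function h_{12}(t) = -2·ln(t^2/6 + 1) - t^2·(t^6 - 135t^2 - 1620)/((t^2 + 6)(t^6 + 135t^2 + 810)) is negative, i.e., h_{12}(t) < 0 for all t > 0. -/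
/-!
With `s = t²`, the bound `log (1 + s/6) ≥ 1 - (1 + s/6)⁻¹ = s / (s + 6)` reduces the claim to a
rational inequality in `s`, whose left side collapses to
`-3 s² (s² + 45) / ((s + 6) (s³ + 135 s + 810))`.
-/

open Real

lemma div_add_six_le_log_div_six_add_one {s : ℝ} (hs : 0 ≤ s) :
    s / (s + 6) ≤ log (s / 6 + 1) := by
  have hpos : 0 < s / 6 + 1 := by positivity
  calc s / (s + 6) = 1 - (s / 6 + 1)⁻¹ := by field_simp; ring
    _ ≤ log (s / 6 + 1) := one_sub_inv_le_log_of_pos hpos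

lemma rational_part_eq {s : ℝ} (hs : 0 ≤ s) :
    -2 * (s / (s + 6)) - s * (s ^ 3 - 135 * s - 1620) / ((s + 6) * (s ^ 3 + 135 * s + 810)) =
      -3 * s ^ 2 * (s ^ 2 + 45) / ((s + 6) * (s ^ 3 + 135 * s + 810)) := by
  have h₁ : s + 6 ≠ 0 := by positivity
  have h₂ : s ^ 3 + 135 * s + 810 ≠ 0 := by positivity
  field_simp
  ring

lemma neg_two_mul_log_sub_rational_neg {s : ℝ} (hs : 0 < s) :
    -2 * log (s / 6 + 1) - s * (s ^ 3 - 135 * s - 1620) / ((s + 6) * (s ^ 3 + 135 * s + 810)) < 0 := by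
  have hlog := div_add_six_le_log_div_six_add_one hs.le
  have hrat : -3 * s ^ 2 * (s ^ 2 + 45) / ((s + 6) * (s ^ 3 + 135 * s + 810)) < 0 :=
    div_neg_of_neg_of_pos (by nlinarith [pow_pos hs 2, pow_pos hs 4]) (by positivity)
  rw [← rational_part_eq hs.le] at hrat
  linarith

theorem h12_neg (t : ℝ) (ht : 0 < t) :
    -2 * Real.log (t ^ 2 / 6 + 1) -
      t ^ 2 * (t ^ 6 - 135 * t ^ 2 - 1620) /
        ((t ^ 2 + 6) * (t ^ 6 + 135 * t ^ 2 + 810)) < 0 := by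
  have h := neg_two_mul_log_sub_rational_neg (pow_pos ht 2)
  rwa [← pow_mul] at h
end

section
/- For all t ∈ (0, 1], ln(1 + t^2/6 + t^6/810) - (1 + t^4/135)·ln(1 + t^2/6) < 0. -/
theorem h11_neg (t : ℝ) (ht0 : 0 < t) (ht1 : t ≤ 1) :
    Real.log (1 + t ^ 2 / 6 + t ^ 6 / 810) -
      (1 + t ^ 4 / 135) * Real.log (1 + t ^ 2 / 6) < 0 := by
  have hx : (0:ℝ) < t ^ 2 / 6 := by positivity
  have hc : (0:ℝ) < t ^ 4 / 135 := by positivity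
  have key : 1 + (1 + t ^ 4 / 135) * (t ^ 2 / 6) < (1 + t ^ 2 / 6) ^ (1 + t ^ 4 / 135) :=
    one_add_mul_self_lt_rpow_one_add (by linarith) (by linarith) (by linarith)
  have hlog : Real.log (1 + (1 + t ^ 4 / 135) * (t ^ 2 / 6)) <
      (1 + t ^ 4 / 135) * Real.log (1 + t ^ 2 / 6) := by
    rw [← Real.log_rpow (by linarith)]
    exact Real.log_lt_log (by positivity) key
  have heq : 1 + t ^ 2 / 6 + t ^ 6 / 810 = 1 + (1 + t ^ 4 / 135) * (t ^ 2 / 6) := by ring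
  rw [heq]
  linarith
end

section
/- For all x > 0 and every integer n ≥ 4, |ln Γ(x+1) - ln√(2π) - (x + 1/2)ln x + x - (x/2)·ln(x·sinh(1/x)) - Σ_{k=3}^{n-1} a_k/x^{2k-1}| ≤ |B_{2n}|/(2n(2n-1)·x^{2n-1}), where a_k = (2k(2k-2)! - 2^{2k-1})·B_{2k}/(2k·(2k)!). -/
/-!
With `N = n - 1`, `a k / x ^ (2k-1)` is the `k`-th Stirling term minus `x / 2` times the `k`-th
term of the series of `ln (sinh t / t)` at `t = 1 / x`, and it vanishes for `k = 1, 2`. So the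
quantity inside the absolute value is `R - (x / 2) R'`, where `R` and `R'` are the remainders of
the two series after `N` terms. The alternating bounds put each remainder between `0` and the next
term, and `x / 2` times the next `sinh` term is `2^(2n-1) (2n-1) / (2n)! ≤ 1` times the next
Stirling term `s`. Hence `R` and `(x / 2) R'` both lie between `0` and `s`, and their difference
is at most `|s|`.
-/

open Real Finset
open scoped Nat

noncomputable def stirlingTerm (x : ℝ) (k : ℕ) : ℝ :=
  (bernoulli (2 * k) : ℝ) / ((2 * k) * (2 * k - 1) * x ^ (2 * k - 1))

noncomputable def logSinhDivTerm (t : ℝ) (k : ℕ) : ℝ :=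
  2 ^ (2 * k) * (bernoulli (2 * k) : ℝ) * t ^ (2 * k) / ((2 * k) * (2 * k)!)

theorem two_pow_mul_le_factorial_succ (n : ℕ) : 2 ^ (2 * n + 1) * (2 * n + 1) ≤ (2 * n + 2)! := by
  induction n with
  | zero => simp
  | succ n ih =>
    rw [show 2 * (n + 1) + 2 = 2 * n + 2 + 1 + 1 by ring, Nat.factorial_succ, Nat.factorial_succ,
      show 2 * (n + 1) + 1 = 2 * n + 1 + 2 by ring, pow_add]
    calc 2 ^ (2 * n + 1) * 2 ^ 2 * (2 * n + 1 + 2)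
        = 4 * (2 * n + 3) * 2 ^ (2 * n + 1) := by ring
      _ ≤ (2 * n + 4) * (2 * n + 1) * (2 * n + 3) * 2 ^ (2 * n + 1) := by
          gcongr; nlinarith
      _ = (2 * n + 4) * (2 * n + 3) * (2 ^ (2 * n + 1) * (2 * n + 1)) := by ring
      _ ≤ (2 * n + 4) * (2 * n + 3) * (2 * n + 2)! := Nat.mul_le_mul_left _ ih
      _ = _ := by ring

theorem mul_mem_uIcc_zero {r p : ℝ} (h0 : 0 ≤ r) (h1 : r ≤ 1) : r * p ∈ Set.uIcc 0 p := by
  rcases le_total 0 p with hp | hp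
  · exact Set.mem_uIcc_of_le (by positivity) (mul_le_of_le_one_left hp h1)
  · exact Set.mem_uIcc_of_ge (le_mul_of_le_one_left hp h1) (mul_nonpos_of_nonneg_of_nonpos h0 hp)

theorem sub_sum_Icc_mem_uIcc_zero {f : ℕ → ℝ} {F : ℝ}
    (h : ∀ m : ℕ, 1 ≤ m → ∑ k ∈ Icc 1 (2 * m), f k < F ∧ F < ∑ k ∈ Icc 1 (2 * m - 1), f k)
    {N : ℕ} (hN : 1 ≤ N) : F - ∑ k ∈ Icc 1 N, f k ∈ Set.uIcc 0 (f (N + 1)) := by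
  have hsucc : ∑ k ∈ Icc 1 (N + 1), f k = ∑ k ∈ Icc 1 N, f k + f (N + 1) :=
    sum_Icc_succ_top (by omega) f
  rcases Nat.even_or_odd' N with ⟨m, rfl | rfl⟩
  · have hlow := (h m (by omega)).1
    have hupp := (h (m + 1) (by omega)).2
    rw [show 2 * (m + 1) - 1 = 2 * m + 1 by omega, hsucc] at hupp
    exact Set.mem_uIcc_of_le (by linarith) (by linarith)
  · obtain ⟨hlow, hupp⟩ := h (m + 1) (by omega)
    rw [show 2 * (m + 1) - 1 = 2 * m + 1 by omega] at hupp
    rw [show 2 * (m + 1) = 2 * m + 1 + 1 by ring, hsucc] at hlow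
    exact Set.mem_uIcc_of_ge (by linarith) (by linarith)

theorem abs_stirlingTerm {x : ℝ} (hx : 0 < x) {k : ℕ} (hk : 1 ≤ k) :
    |stirlingTerm x k| = |(bernoulli (2 * k) : ℝ)| / ((2 * k) * (2 * k - 1)) / x ^ (2 * k - 1) := by
  have hk' : (1 : ℝ) ≤ k := by exact_mod_cast hk
  have hden : 0 < (2 * k : ℝ) * (2 * k - 1) := by nlinarith
  rw [stirlingTerm, abs_div, abs_of_pos (mul_pos hden (pow_pos hx _)), div_div]

theorem stirlingTerm_sub_half_mul_logSinhDivTerm {x : ℝ} (hx : x ≠ 0) {k : ℕ} (hk : 1 ≤ k) :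
    stirlingTerm x k - x / 2 * logSinhDivTerm (1 / x) k =
      (((2 * k) * (2 * k - 2)! : ℕ) - (2 : ℝ) ^ (2 * k - 1)) * (bernoulli (2 * k) : ℝ) /
        ((2 * k) * (2 * k)!) / x ^ (2 * k - 1) := by
  obtain ⟨j, rfl⟩ : ∃ j, k = j + 1 := ⟨k - 1, by omega⟩
  rw [logSinhDivTerm, stirlingTerm, show 2 * (j + 1) = 2 * j + 2 by ring,
    show 2 * j + 2 - 1 = 2 * j + 1 by omega, show 2 * j + 2 - 2 = 2 * j by omega,
    Nat.factorial_succ, Nat.factorial_succ, one_div, inv_pow]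
  push_cast
  rw [show 2 * ((j : ℝ) + 1) - 1 = 2 * j + 1 by ring]
  field_simp
  ring

theorem sum_Icc_three_div_pow_eq {a : ℕ → ℝ}
    (ha : ∀ k : ℕ, a k =
      (((2 * k) * (2 * k - 2)! : ℕ) - (2 : ℝ) ^ (2 * k - 1)) * (bernoulli (2 * k) : ℝ) /
        ((2 * k) * (2 * k)!))
    {x : ℝ} (hx : x ≠ 0) (N : ℕ) :
    ∑ k ∈ Icc 3 N, a k / x ^ (2 * k - 1) =
      ∑ k ∈ Icc 1 N, stirlingTerm x k - x / 2 * ∑ k ∈ Icc 1 N, logSinhDivTerm (1 / x) k := by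
  have ha12 : ∀ k ∈ Icc 1 N, k ∉ Icc 3 N → a k / x ^ (2 * k - 1) = 0 := by
    intro k hk hk3
    obtain rfl | rfl : k = 1 ∨ k = 2 := by simp only [mem_Icc] at hk hk3; omega
    all_goals norm_num [ha, Nat.factorial]
  rw [sum_subset (Icc_subset_Icc_left (by norm_num)) ha12, mul_sum, ← sum_sub_distrib]
  exact sum_congr rfl fun k hk => by
    rw [ha, ← stirlingTerm_sub_half_mul_logSinhDivTerm hx (mem_Icc.1 hk).1]

theorem half_mul_logSinhDivTerm_one_div {x : ℝ} (hx : x ≠ 0) (k : ℕ) :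
    x / 2 * logSinhDivTerm (1 / x) (k + 1) =
      ((2 ^ (2 * k + 1) * (2 * k + 1) : ℕ) / (2 * k + 2)! : ℝ) * stirlingTerm x (k + 1) := by
  rw [logSinhDivTerm, stirlingTerm, show 2 * (k + 1) = 2 * k + 2 by ring,
    show 2 * k + 2 - 1 = 2 * k + 1 by omega, one_div, inv_pow]
  push_cast
  rw [show 2 * ((k : ℝ) + 1) - 1 = 2 * k + 1 by ring]
  field_simp
  ring

theorem half_mul_logSinhDivTerm_one_div_mem_uIcc {x : ℝ} (hx : x ≠ 0) (k : ℕ) :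
    x / 2 * logSinhDivTerm (1 / x) (k + 1) ∈ Set.uIcc 0 (stirlingTerm x (k + 1)) := by
  rw [half_mul_logSinhDivTerm_one_div hx]
  refine mul_mem_uIcc_zero (by positivity) ((div_le_one (by positivity)).2 ?_)
  exact_mod_cast two_pow_mul_le_factorial_succ k

theorem remainder_estimate
    (hStirling : ∀ m : ℕ, 1 ≤ m → ∀ x : ℝ, 0 < x →
      (∑ k ∈ Finset.Icc 1 (2 * m),
          ((bernoulli (2 * k) : ℝ)) / ((2 * k) * (2 * k - 1) * x ^ (2 * k - 1))) <
        Real.log (Real.Gamma (x + 1)) - Real.log (Real.sqrt (2 * Real.pi * x))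
          - x * Real.log x + x ∧
      Real.log (Real.Gamma (x + 1)) - Real.log (Real.sqrt (2 * Real.pi * x))
          - x * Real.log x + x <
        (∑ k ∈ Finset.Icc 1 (2 * m - 1),
          ((bernoulli (2 * k) : ℝ)) / ((2 * k) * (2 * k - 1) * x ^ (2 * k - 1))))
    (hsinh : ∀ m : ℕ, 1 ≤ m → ∀ t : ℝ, 0 < t →
      (∑ k ∈ Finset.Icc 1 (2 * m),
          2 ^ (2 * k) * ((bernoulli (2 * k) : ℝ)) * t ^ (2 * k)
            / ((2 * k) * (Nat.factorial (2 * k)))) <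
        Real.log (Real.sinh t / t) ∧
      Real.log (Real.sinh t / t) <
        (∑ k ∈ Finset.Icc 1 (2 * m - 1),
          2 ^ (2 * k) * ((bernoulli (2 * k) : ℝ)) * t ^ (2 * k)
            / ((2 * k) * (Nat.factorial (2 * k)))))
    (a : ℕ → ℝ)
    (ha : ∀ k : ℕ, a k =
      (((2 * k) * Nat.factorial (2 * k - 2) : ℕ) - (2 : ℝ) ^ (2 * k - 1)) *
        (bernoulli (2 * k) : ℝ) / ((2 * k) * (Nat.factorial (2 * k))))
    (n : ℕ) (hn : 4 ≤ n) (x : ℝ) (hx : 0 < x) :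
    |Real.log (Real.Gamma (x + 1)) - Real.log (Real.sqrt (2 * Real.pi))
        - (x + 1 / 2) * Real.log x + x
        - (x / 2) * Real.log (x * Real.sinh (1 / x))
        - ∑ k ∈ Finset.Icc 3 (n - 1), a k / x ^ (2 * k - 1)| ≤
      |(bernoulli (2 * n) : ℝ)| / ((2 * n) * (2 * n - 1)) / x ^ (2 * n - 1) := by
  obtain ⟨N, rfl⟩ : ∃ N, n = N + 1 := ⟨n - 1, by omega⟩
  have hS := sub_sum_Icc_mem_uIcc_zero (f := stirlingTerm x) (fun m hm => hStirling m hm x hx)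
    (N := N) (by omega)
  have hL := sub_sum_Icc_mem_uIcc_zero (f := logSinhDivTerm (1 / x))
    (fun m hm => hsinh m hm (1 / x) (by positivity)) (N := N) (by omega)
  replace hL := Set.mem_image_of_mem (x / 2 * ·) hL
  rw [Set.image_const_mul_uIcc, mul_zero] at hL
  have hdiff := Set.abs_sub_le_of_uIcc_subset_uIcc (Set.uIcc_subset_uIcc
    (Set.uIcc_subset_uIcc_left (half_mul_logSinhDivTerm_one_div_mem_uIcc hx.ne' N) hL) hS)
  rw [sub_zero, abs_stirlingTerm hx (by omega)] at hdiff
  refine Eq.trans_le ?_ hdiff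
  congr 1
  have hsqrt : Real.log √(2 * π * x) = Real.log √(2 * π) + Real.log x / 2 := by
    rw [sqrt_mul (by positivity), log_mul (by positivity) (by positivity), log_sqrt hx.le]
  rw [Nat.add_sub_cancel, sum_Icc_three_div_pow_eq ha hx.ne' N, hsqrt,
    show sinh (1 / x) / (1 / x) = x * sinh (1 / x) by field_simp]
  ring
end
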